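/- Let M be a metric space, U ⊆ M an open set with closure Ū, and x ∈ U. Let H be a complex Hilbert space, W ⊆ H a dense linear subspace, and {S(y)}_{y∈Ū} a family of self-adjoint operators on H, all with domain W, such that y ↦ S(y) is norm-continuous from Ū into the bounded operators from (W, graph norm of S(x)) to H. Let a ∈ [0,1) and suppose ‖(S(y) − S(x))ξ‖ ≤ a‖(S(x)+i)ξ‖ for all y ∈ Ū and all ξ ∈ W. Then there exists a family {S^U(y)}_{y∈M} of self-adjoint operators on H, all with domain W, such that y ↦ S^U(y) is norm-continuous from M into the bounded operators (W, graph norm of S(x)) → H, S^U(y) = S(y) for all y ∈ Ū, and ‖(S^U(y) − S(x))ξ‖ ≤ a‖(S(x)+i)ξ‖ for all y ∈ M and all ξ ∈ W. [Hilbert-space case of Lemma 3.9(1) (extension).] -/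

import Mathlib

/-!
Dugundji's extension theorem extends `S|_Ū` continuously to `M` so that every new value is a
convex combination of old ones. Symmetry and the relative bound
`‖(T - S x) ξ‖ ≤ a ‖(S x + i) ξ‖` are convex conditions on `T`, so they survive. Since `S x` is
symmetric, `S x ± i` is an isometry from `W` (with the graph norm) onto `H`, and the relative bound
with `a < 1` makes `T ± i` a small perturbation of it, hence also surjective (Kato–Rellich).
-/

open Set Metric Topology

section Dugundji

variable {M E : Type*} [MetricSpace M] [AddCommGroup E] [Module ℝ E] [TopologicalSpace E]
  {C : Set M}

theorem exists_continuousOn_compl_mem_convexHull [ContinuousAdd E] [ContinuousSMul ℝ E]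
    (hC : IsClosed C) (hne : C.Nonempty) (g : M → E) :
    ∃ F : M → E, ContinuousOn F Cᶜ ∧
      ∀ y ∉ C, F y ∈ convexHull ℝ (g '' (C ∩ ball y (3 * infDist y C))) := by
  classical
  obtain ⟨G, hG⟩ := exists_continuous_forall_mem_convex_of_local_const
    (X := ↥Cᶜ) (t := fun v => convexHull ℝ (g '' (C ∩ ball (v : M) (3 * infDist (v : M) C))))
    (fun _ => convex_convexHull ℝ _) fun v => by
      set d := infDist (v : M) C
      have hd : 0 < d := (hC.notMem_iff_infDist_pos hne).1 v.2
      obtain ⟨p, hpC, hp⟩ := (infDist_lt_iff hne).1 (by linarith : d < 2 * d)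
      refine ⟨g p, ?_⟩
      -- for `w` within `d / 4` of `v`: `dist w p < 9 d / 4` and `d < 4 / 3 * infDist w C`
      filter_upwards [ball_mem_nhds v (by positivity : 0 < d / 4)] with w hw
      refine subset_convexHull ℝ _ (mem_image_of_mem g ⟨hpC, ?_⟩)
      rw [mem_ball, Subtype.dist_eq] at hw
      have hd_le : d ≤ infDist (w : M) C + dist (v : M) w := infDist_le_infDist_add_dist
      have htri := dist_triangle p (v : M) w
      rw [dist_comm] at hp hw
      rw [mem_ball]
      linarith
  refine ⟨fun y => if h : y ∈ C then 0 else G ⟨y, h⟩, ?_, fun y hy => ?_⟩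
  · rw [continuousOn_iff_continuous_domRestrict]
    convert G.continuous using 1
    ext v
    exact dif_neg v.2
  · simpa [hy] using hG ⟨y, hy⟩

theorem continuousAt_piecewise_of_mem_convexHull [LocallyConvexSpace ℝ E] [DecidablePred (· ∈ C)]
    {g F : M → E} (hg : ContinuousOn g C)
    (hF : ∀ y ∉ C, F y ∈ convexHull ℝ (g '' (C ∩ ball y (3 * infDist y C))))
    {y : M} (hy : y ∈ C) : ContinuousAt (C.piecewise g F) y := by
  refine ((LocallyConvexSpace.convex_basis (𝕜 := ℝ) (C.piecewise g F y)).tendsto_right_iff).2 ?_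
  rintro N ⟨hN, hNconv⟩
  rw [piecewise_eq_of_mem _ _ _ hy] at hN
  obtain ⟨δ, hδ, hgN⟩ := mem_nhdsWithin_iff.1 (hg y hy hN)
  filter_upwards [ball_mem_nhds y (by positivity : 0 < δ / 4)] with y' hy'
  rw [mem_ball] at hy'
  by_cases hy'C : y' ∈ C
  · rw [piecewise_eq_of_mem _ _ _ hy'C]
    exact hgN ⟨mem_ball.2 (by linarith), hy'C⟩
  · rw [piecewise_eq_of_notMem _ _ _ hy'C]
    refine convexHull_min ?_ hNconv (hF y' hy'C)
    rintro _ ⟨z, ⟨hzC, hz⟩, rfl⟩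
    have hd_le : infDist y' C ≤ dist y' y := infDist_le_dist_of_mem hy
    have htri := dist_triangle z y' y
    rw [mem_ball] at hz
    exact hgN ⟨mem_ball.2 (by linarith), hzC⟩

theorem exists_continuous_extension_range_subset_convexHull [ContinuousAdd E]
    [ContinuousSMul ℝ E] [LocallyConvexSpace ℝ E] (hC : IsClosed C) (hne : C.Nonempty)
    {g : M → E} (hg : ContinuousOn g C) :
    ∃ G : M → E, Continuous G ∧ EqOn G g C ∧ range G ⊆ convexHull ℝ (g '' C) := by
  classical
  obtain ⟨F, hFcont, hF⟩ := exists_continuousOn_compl_mem_convexHull hC hne g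
  refine ⟨C.piecewise g F, continuous_iff_continuousAt.2 fun y => ?_, piecewise_eqOn _ _ _, ?_⟩
  · by_cases hy : y ∈ C
    · exact continuousAt_piecewise_of_mem_convexHull hg hF hy
    · have hCc : Cᶜ ∈ 𝓝 y := hC.isOpen_compl.mem_nhds hy
      exact (hFcont.continuousAt hCc).congr
        (Filter.eventuallyEq_of_mem hCc fun y' hy' => (piecewise_eq_of_notMem _ _ _ hy').symm)
  · rintro _ ⟨y, rfl⟩
    by_cases hy : y ∈ C
    · rw [piecewise_eq_of_mem _ _ _ hy]
      exact subset_convexHull ℝ _ (mem_image_of_mem g hy)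
    · rw [piecewise_eq_of_notMem _ _ _ hy]
      exact convexHull_mono (image_mono inter_subset_left) (hF y hy)

end Dugundji

theorem ContinuousLinearMap.surjective_of_norm_sub_le {𝕜 E F : Type*} [NontriviallyNormedField 𝕜]
    [NormedAddCommGroup E] [NormedSpace 𝕜 E] [NormedAddCommGroup F] [NormedSpace 𝕜 F]
    [CompleteSpace F] {A T : E →L[𝕜] F} (hA : ∀ ξ, ‖A ξ‖ = ‖ξ‖) (hAs : Function.Surjective A)
    {a : ℝ} (ha0 : 0 ≤ a) (ha1 : a < 1) (hTA : ∀ ξ, ‖T ξ - A ξ‖ ≤ a * ‖ξ‖) :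
    Function.Surjective T := by
  let A' : E ≃ₗᵢ[𝕜] F := .ofSurjective ⟨A.toLinearMap, hA⟩ hAs
  let D : F →L[𝕜] F := (T - A).comp A'.symm.toContinuousLinearEquiv.toContinuousLinearMap
  have hD : ‖-D‖ < 1 := by
    refine (norm_neg D).trans_lt (lt_of_le_of_lt (D.opNorm_le_bound ha0 fun ψ => ?_) ha1)
    simpa [D, A'.norm_map, A'.apply_symm_apply] using hTA (A'.symm ψ)
  have hA' : ∀ ξ, A'.symm (A ξ) = ξ := A'.symm_apply_apply
  have hTD : ∀ ξ, T ξ = (1 + D) (A ξ) := fun ξ => by simp [D, hA']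
  intro ψ
  let u := Units.oneSub (-D) hD
  refine ⟨A'.symm (u⁻¹.val ψ), ?_⟩
  rw [hTD, ← sub_neg_eq_add, ← Units.val_oneSub (-D) hD]
  change (u : F →L[𝕜] F) (A' (A'.symm _)) = ψ
  rw [A'.apply_symm_apply]
  exact DFunLike.congr_fun u.mul_inv ψ

section Symmetric

variable {W H : Type*} [NormedAddCommGroup W] [NormedSpace ℂ W] [NormedAddCommGroup H]
  [InnerProductSpace ℂ H]

theorem norm_add_I_smul_sq {u v : H} (h : inner ℂ u v = inner ℂ v u) :
    ‖u + Complex.I • v‖ ^ 2 = ‖u‖ ^ 2 + ‖v‖ ^ 2 := by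
  have him : (inner ℂ u v).im = 0 := by
    rw [← Complex.conj_eq_iff_im, inner_conj_symm, h]
  rw [norm_add_sq (𝕜 := ℂ), inner_smul_right, norm_smul, Complex.norm_I, one_mul]
  simp [him]

theorem norm_sub_I_smul_sq {u v : H} (h : inner ℂ u v = inner ℂ v u) :
    ‖u - Complex.I • v‖ ^ 2 = ‖u‖ ^ 2 + ‖v‖ ^ 2 := by
  rw [sub_eq_add_neg, ← smul_neg, norm_add_I_smul_sq (by rw [inner_neg_left, inner_neg_right, h]),
    norm_neg]

theorem convex_setOf_inner_apply_comm (ι : W →L[ℂ] H) :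
    Convex ℝ {T : W →L[ℂ] H | ∀ ξ η, inner ℂ (T ξ) (ι η) = inner ℂ (ι ξ) (T η)} := by
  intro T hT T' hT' s t _ _ _ ξ η
  simp only [add_apply, FunLike.coe_smul, Pi.smul_apply,
    RCLike.real_smul_eq_coe_smul (K := ℂ), inner_add_left, inner_add_right, inner_smul_real_left,
    inner_smul_real_right, hT ξ η, hT' ξ η]

theorem convex_setOf_norm_sub_apply_le (S₀ : W →L[ℂ] H) (r : W → ℝ) :
    Convex ℝ {T : W →L[ℂ] H | ∀ ξ, ‖T ξ - S₀ ξ‖ ≤ r ξ} := by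
  simp only [← dist_eq_norm, ← mem_closedBall, ofPred_forall]
  exact convex_iInter fun ξ => (convex_closedBall _ _).is_linear_preimage
    ⟨fun T T' => rfl, fun c T => rfl⟩

end Symmetric

theorem extension_one_general
    {M : Type*} [MetricSpace M]
    {H : Type*} [NormedAddCommGroup H] [InnerProductSpace ℂ H] [CompleteSpace H]
    {W : Type*} [NormedAddCommGroup W] [NormedSpace ℂ W]
    (ι : W →L[ℂ] H)
    (U : Set M) (x : M) (hx : x ∈ U)
    (S : M → (W →L[ℂ] H))
    (hS_cont : ContinuousOn S (closure U))
    (h_graph : ∀ ξ : W, ‖ξ‖ ^ 2 = ‖ι ξ‖ ^ 2 + ‖S x ξ‖ ^ 2)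
    (h_symm : ∀ y ∈ closure U, ∀ (ξ η : W),
      (inner ℂ (S y ξ) (ι η) : ℂ) = inner ℂ (ι ξ) (S y η))
    (h_sa : ∀ y ∈ closure U, ∀ ψ : H,
      (∃ ξ : W, S y ξ + Complex.I • ι ξ = ψ) ∧ (∃ ξ : W, S y ξ - Complex.I • ι ξ = ψ))
    (a : ℝ) (ha0 : 0 ≤ a) (ha1 : a < 1)
    (h_small : ∀ y ∈ closure U, ∀ ξ : W,
      ‖S y ξ - S x ξ‖ ≤ a * ‖S x ξ + Complex.I • ι ξ‖) :
    ∃ SU : M → (W →L[ℂ] H),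
      Continuous SU ∧
      (∀ y ∈ closure U, SU y = S y) ∧
      (∀ (y : M) (ξ η : W), (inner ℂ (SU y ξ) (ι η) : ℂ) = inner ℂ (ι ξ) (SU y η)) ∧
      (∀ (y : M) (ψ : H),
        (∃ ξ : W, SU y ξ + Complex.I • ι ξ = ψ) ∧
        (∃ ξ : W, SU y ξ - Complex.I • ι ξ = ψ)) ∧
      (∀ (y : M) (ξ : W), ‖SU y ξ - S x ξ‖ ≤ a * ‖S x ξ + Complex.I • ι ξ‖) := by
  have hxC : x ∈ closure U := subset_closure hx
  have hSx_add : ∀ ξ, ‖S x ξ + Complex.I • ι ξ‖ = ‖ξ‖ := fun ξ => by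
    rw [← sq_eq_sq₀ (norm_nonneg _) (norm_nonneg _), norm_add_I_smul_sq (h_symm x hxC ξ ξ),
      h_graph, add_comm]
  have hSx_sub : ∀ ξ, ‖S x ξ - Complex.I • ι ξ‖ = ‖ξ‖ := fun ξ => by
    rw [← sq_eq_sq₀ (norm_nonneg _) (norm_nonneg _), norm_sub_I_smul_sq (h_symm x hxC ξ ξ),
      h_graph, add_comm]
  obtain ⟨SU, hSU_cont, hSU_eq, hSU_hull⟩ := exists_continuous_extension_range_subset_convexHull
    isClosed_closure ⟨x, hxC⟩ hS_cont
  have hSU_mem : ∀ y, SU y ∈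
      {T : W →L[ℂ] H | ∀ ξ η, inner ℂ (T ξ) (ι η) = inner ℂ (ι ξ) (T η)} ∩
        {T | ∀ ξ, ‖T ξ - S x ξ‖ ≤ a * ‖S x ξ + Complex.I • ι ξ‖} := fun y =>
    convexHull_min (by rintro _ ⟨z, hz, rfl⟩; exact ⟨h_symm z hz, h_small z hz⟩)
      ((convex_setOf_inner_apply_comm ι).inter (convex_setOf_norm_sub_apply_le _ _))
      (hSU_hull (mem_range_self y))
  have hSU_bound : ∀ y ξ, ‖SU y ξ - S x ξ‖ ≤ a * ‖ξ‖ := fun y ξ =>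
    hSx_add ξ ▸ (hSU_mem y).2 ξ
  refine ⟨SU, hSU_cont, hSU_eq, fun y => (hSU_mem y).1, fun y ψ => ⟨?_, ?_⟩, fun y => (hSU_mem y).2⟩
  · exact ContinuousLinearMap.surjective_of_norm_sub_le (A := S x + Complex.I • ι)
      (T := SU y + Complex.I • ι) hSx_add (fun ψ => (h_sa x hxC ψ).1) ha0 ha1
      (fun ξ => by simpa [add_sub_add_right_eq_sub] using hSU_bound y ξ) ψ
  · exact ContinuousLinearMap.surjective_of_norm_sub_le (A := S x - Complex.I • ι)
      (T := SU y - Complex.I • ι) hSx_sub (fun ψ => (h_sa x hxC ψ).2) ha0 ha1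
      (fun ξ => by simpa [sub_sub_sub_cancel_right] using hSU_bound y ξ) ψ

/-- Hilbert-space case of Lemma 3.9(1), `extension`.
`M` is a metric space, `U ⊆ M` open, `x ∈ U`.  `{S(y)}_{y∈Ū}` is a family of self-adjoint
operators on `H` with common dense domain `W` (encoded as the abstract complete normed
space `W` with injective dense inclusion `ι : W →L[ℂ] H`, whose norm is the graph norm of
`S x`; self-adjointness of `S y` for `y ∈ Ū` = symmetry plus surjectivity of `S y ± i`),
norm-continuous on `closure U` (`S` is a total function, constrained only on `closure U`).
If `‖(S y − S x)ξ‖ ≤ a‖(S x + i)ξ‖` for all `y ∈ Ū`, `ξ ∈ W`, with `a ∈ [0,1)`, then there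
is a norm-continuous family `{SU y}_{y∈M}` of self-adjoint operators with domain `W`
extending `S|_Ū` and satisfying the same bound for all `y ∈ M`. -/
theorem extension_one
    {M : Type*} [MetricSpace M]
    {H : Type*} [NormedAddCommGroup H] [InnerProductSpace ℂ H] [CompleteSpace H]
    {W : Type*} [NormedAddCommGroup W] [NormedSpace ℂ W] [CompleteSpace W]
    (ι : W →L[ℂ] H) (hι_inj : Function.Injective ι) (hι_dense : DenseRange ι)
    (U : Set M) (hU : IsOpen U) (x : M) (hx : x ∈ U)
    (S : M → (W →L[ℂ] H))
    (hS_cont : ContinuousOn S (closure U))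
    (h_graph : ∀ ξ : W, ‖ξ‖ ^ 2 = ‖ι ξ‖ ^ 2 + ‖S x ξ‖ ^ 2)
    (h_symm : ∀ y ∈ closure U, ∀ (ξ η : W),
      (inner ℂ (S y ξ) (ι η) : ℂ) = inner ℂ (ι ξ) (S y η))
    (h_sa : ∀ y ∈ closure U, ∀ ψ : H,
      (∃ ξ : W, S y ξ + Complex.I • ι ξ = ψ) ∧ (∃ ξ : W, S y ξ - Complex.I • ι ξ = ψ))
    (a : ℝ) (ha0 : 0 ≤ a) (ha1 : a < 1)
    (h_small : ∀ y ∈ closure U, ∀ ξ : W,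
      ‖S y ξ - S x ξ‖ ≤ a * ‖S x ξ + Complex.I • ι ξ‖) :
    ∃ SU : M → (W →L[ℂ] H),
      Continuous SU ∧
      (∀ y ∈ closure U, SU y = S y) ∧
      (∀ (y : M) (ξ η : W), (inner ℂ (SU y ξ) (ι η) : ℂ) = inner ℂ (ι ξ) (SU y η)) ∧
      (∀ (y : M) (ψ : H),
        (∃ ξ : W, SU y ξ + Complex.I • ι ξ = ψ) ∧
        (∃ ξ : W, SU y ξ - Complex.I • ι ξ = ψ)) ∧
      (∀ (y : M) (ξ : W), ‖SU y ξ - S x ξ‖ ≤ a * ‖S x ξ + Complex.I • ι ξ‖) :=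
  extension_one_general ι U x hx S hS_cont h_graph h_symm h_sa a ha0 ha1 h_small
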